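/- Let A be Hermitian and f a real-valued filter function with f(λ_k) ≠ 0 for the m₀ eigenvalues of largest |f|-value, which are assumed strictly larger in magnitude than |f(λ_{m₀+1})|. If a subspace X of dimension m₀ has nonzero projection onto each of the top-m₀ eigenvectors, then the subspace f(A)^j X converges to the span of the top-m₀ eigenvectors of f(A), with the angle to that invariant subspace bounded by C·(|f(λ_{m₀+1})|/|f(λ_{m₀})|)^j for some constant C independent of j. -/

import Mathlib

/-!
Work in the orthonormal eigenbasis `b` of `f(A)` and let `P` be the orthogonal projection onto
`U = span {b k | k < m₀}`. The power `f(A)^j` multiplies the coordinates along `U` by factors of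
modulus at least `σ^j` and the others by factors of modulus at most `τ^j`, where `σ` and `τ` are
the `m₀`-th and `(m₀+1)`-st largest values of `|f(λ)|`. As `X ∩ Uᗮ = 0` and `X` is
finite-dimensional, `P` is bounded below on `X`: `‖w‖ ≤ K ‖P w‖`. So for a unit vector
`v = f(A)^j w`, `dist(v, U) ≤ ‖v - P v‖ ≤ τ^j ‖w‖ ≤ K τ^j ‖P w‖ ≤ K (τ/σ)^j ‖v‖`.
-/

open Matrix

section

variable {𝕜 E ι : Type*} [RCLike 𝕜] [NormedAddCommGroup E] [InnerProductSpace 𝕜 E]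
  [Fintype ι]

theorem Submodule.exists_norm_le_mul_norm_starProjection {U X : Submodule 𝕜 E}
    [U.HasOrthogonalProjection] [FiniteDimensional 𝕜 X] (h : X ⊓ Uᗮ = ⊥) :
    ∃ K : NNReal, ∀ x ∈ X, ‖x‖ ≤ K * ‖U.starProjection x‖ := by
  have hker : LinearMap.ker (U.starProjection.toLinearMap ∘ₗ X.subtype) = ⊥ := by
    rw [eq_bot_iff]
    rintro ⟨x, hx⟩ hx0
    have hxU : x ∈ Uᗮ := (U.starProjection_apply_eq_zero_iff).mp hx0
    simpa [h] using (Submodule.mem_inf.mpr ⟨hx, hxU⟩ : x ∈ X ⊓ Uᗮ)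
  obtain ⟨K, -, hK⟩ := LinearMap.exists_antilipschitzWith _ hker
  exact ⟨K, fun x hx => hK.le_mul_norm (map_zero _) ⟨x, hx⟩⟩

theorem Matrix.toEuclideanLin_sum_smul_vecMulVec_apply [DecidableEq ι]
    (b : OrthonormalBasis ι 𝕜 (EuclideanSpace 𝕜 ι)) (g : ι → 𝕜) (l : ι) :
    toEuclideanLin (∑ k, g k • vecMulVec (fun i => b k i) (fun j => star (b k j))) (b l) =
      g l • b l := by
  have horth : ∀ k, (fun j => starRingEnd 𝕜 (b k j)) ⬝ᵥ b l = if k = l then 1 else 0 :=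
    fun k => by
      rw [dotProduct_comm, ← orthonormal_iff_ite.mp b.orthonormal k l]
      rfl
  ext i
  simp [Matrix.toLpLin_apply, Matrix.vecMulVec_mulVec, horth, ite_apply]

namespace OrthonormalBasis

variable (b : OrthonormalBasis ι 𝕜 E)

theorem norm_le_mul_norm_of_norm_repr_le {x y : E} {c : ℝ} (hc : 0 ≤ c)
    (h : ∀ k, ‖b.repr x k‖ ≤ c * ‖b.repr y k‖) : ‖x‖ ≤ c * ‖y‖ := by
  rw [← b.repr.norm_map x, ← b.repr.norm_map y, EuclideanSpace.norm_eq, EuclideanSpace.norm_eq,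
    ← Real.sqrt_sq hc, ← Real.sqrt_mul (sq_nonneg c), Finset.mul_sum]
  gcongr with k
  rw [← mul_pow]
  exact pow_le_pow_left₀ (norm_nonneg _) (h k) 2

theorem repr_apply_of_apply_eq_smul {T : E →ₗ[𝕜] E} {g : ι → 𝕜}
    (hT : ∀ k, T (b k) = g k • b k) (x : E) (k : ι) :
    b.repr (T x) k = g k * b.repr x k := by
  have : b.toBasis.coord k ∘ₗ T = g k • b.toBasis.coord k :=
    b.toBasis.ext fun l => by
      rcases eq_or_ne l k with rfl | hl
      · simp [hT]
      · simp [hT, b.repr_apply_apply, b.orthonormal.2 hl.symm]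
  simpa using LinearMap.congr_fun this x

theorem repr_pow_apply_of_apply_eq_smul {T : E →ₗ[𝕜] E} {g : ι → 𝕜}
    (hT : ∀ k, T (b k) = g k • b k) (j : ℕ) (x : E) (k : ι) :
    b.repr ((T ^ j) x) k = g k ^ j * b.repr x k := by
  induction j with
  | zero => simp
  | succ j ih =>
    rw [pow_succ', Module.End.mul_apply, b.repr_apply_of_apply_eq_smul hT, ih, pow_succ']
    ring

theorem repr_starProjection_span_image [FiniteDimensional 𝕜 E] (s : Set ι) (x : E) (k : ι) :
    b.repr ((Submodule.span 𝕜 (b '' s)).starProjection x) k =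
      s.indicator (fun i => b.repr x i) k := by
  set y := b.repr.symm (WithLp.toLp 2 (s.indicator fun i => b.repr x i))
  suffices (Submodule.span 𝕜 (b '' s)).starProjection x = y by simp [this, y]
  refine Submodule.eq_starProjection_of_mem_orthogonal ?_ ?_
  · rw [show y = _ from (b.sum_repr_symm _).symm]
    refine Submodule.sum_mem _ fun i _ => ?_
    by_cases hi : i ∈ s
    · exact Submodule.smul_mem _ _ (Submodule.subset_span ⟨i, hi, rfl⟩)
    · simp [hi]
  · refine Submodule.isOrtho_iff_le.mp (Submodule.isOrtho_span.mpr ?_)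
      (Submodule.mem_span_singleton_self (x - y))
    rintro _ rfl _ ⟨i, hi, rfl⟩
    rw [inner_eq_zero_symm]
    simp [← b.repr_apply_apply, y, hi]

section Iteration

variable [FiniteDimensional 𝕜 E] {T : E →ₗ[𝕜] E} {g : ι → 𝕜} {s : Set ι}

theorem norm_pow_apply_sub_starProjection_le (hT : ∀ k, T (b k) = g k • b k) {τ : ℝ}
    (hτ : 0 ≤ τ) (hsc : ∀ k ∉ s, ‖g k‖ ≤ τ) (j : ℕ) (x : E) :
    ‖(T ^ j) x - (Submodule.span 𝕜 (b '' s)).starProjection ((T ^ j) x)‖ ≤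
      τ ^ j * ‖x‖ := by
  refine b.norm_le_mul_norm_of_norm_repr_le (pow_nonneg hτ j) fun k => ?_
  by_cases hk : k ∈ s
  · simp only [map_sub, PiLp.sub_apply, b.repr_starProjection_span_image,
      Set.indicator_of_mem hk, sub_self, norm_zero]
    positivity
  · simp only [map_sub, PiLp.sub_apply, b.repr_starProjection_span_image,
      Set.indicator_of_notMem hk, sub_zero, b.repr_pow_apply_of_apply_eq_smul hT, norm_mul,
      norm_pow]
    gcongr
    exact hsc k hk

theorem norm_starProjection_le_inv_pow_mul_norm_pow_apply (hT : ∀ k, T (b k) = g k • b k)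
    {σ : ℝ} (hσ : 0 < σ) (hs : ∀ k ∈ s, σ ≤ ‖g k‖) (j : ℕ) (x : E) :
    ‖(Submodule.span 𝕜 (b '' s)).starProjection x‖ ≤ (σ ^ j)⁻¹ * ‖(T ^ j) x‖ := by
  refine b.norm_le_mul_norm_of_norm_repr_le (by positivity) fun k => ?_
  rw [b.repr_starProjection_span_image, b.repr_pow_apply_of_apply_eq_smul hT, norm_mul,
    norm_pow, le_inv_mul_iff₀ (by positivity)]
  by_cases hk : k ∈ s
  · rw [Set.indicator_of_mem hk]
    gcongr
    exact hs k hk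
  · rw [Set.indicator_of_notMem hk, norm_zero, mul_zero]
    positivity

theorem exists_infDist_map_pow_le (hT : ∀ k, T (b k) = g k • b k) {σ τ : ℝ} (hσ : 0 < σ)
    (hτ : 0 ≤ τ) (hs : ∀ k ∈ s, σ ≤ ‖g k‖) (hsc : ∀ k ∉ s, ‖g k‖ ≤ τ) {X : Submodule 𝕜 E}
    (hX : X ⊓ (Submodule.span 𝕜 (b '' s))ᗮ = ⊥) :
    ∃ C : ℝ, ∀ j : ℕ, ∀ v ∈ X.map (T ^ j), ‖v‖ = 1 →
      Metric.infDist v (Submodule.span 𝕜 (b '' s) : Set E) ≤ C * (τ / σ) ^ j := by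
  set U := Submodule.span 𝕜 (b '' s)
  obtain ⟨K, hK⟩ := U.exists_norm_le_mul_norm_starProjection hX
  refine ⟨K, fun j v hv hv1 => ?_⟩
  obtain ⟨w, hw, rfl⟩ := Submodule.mem_map.mp hv
  calc Metric.infDist ((T ^ j) w) U
      ≤ dist ((T ^ j) w) (U.starProjection ((T ^ j) w)) :=
        Metric.infDist_le_dist_of_mem (U.starProjection_apply_mem _)
    _ ≤ τ ^ j * ‖w‖ := by
        rw [dist_eq_norm]
        exact b.norm_pow_apply_sub_starProjection_le hT hτ hsc j w
    _ ≤ τ ^ j * (K * ((σ ^ j)⁻¹ * ‖(T ^ j) w‖)) := by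
        gcongr
        refine (hK w hw).trans ?_
        gcongr
        exact b.norm_starProjection_le_inv_pow_mul_norm_pow_apply hT hσ hs j w
    _ = K * (τ / σ) ^ j := by rw [hv1, div_pow]; ring

end Iteration

end OrthonormalBasis

end

/-- Convergence of filtered subspace iteration: if the `m₀` eigenvalues of largest
`|f|`-value are nonzero under `f` and strictly dominate `|f(λ_{m₀+1})|`, and the initial
`m₀`-dimensional subspace `X` has trivial intersection with the orthogonal complement of
the span of the top `m₀` eigenvectors, then the subspaces `f(A)^j X` converge to that
span: the (sine of the largest principal) angle—measured by the distance from unit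
vectors of the iterate to the target subspace—is bounded by
`C · (|f(λ_{m₀+1})|/|f(λ_{m₀})|)^j` with `C` independent of `j`. -/
theorem stmt_9 {n m₀ : ℕ} (A : Matrix (Fin n) (Fin n) ℂ) (hA : A.IsHermitian)
    (f : ℝ → ℝ) (hm : m₀ < n)
    (hord : ∀ j k : Fin n, j ≤ k → |f (hA.eigenvalues k)| ≤ |f (hA.eigenvalues j)|)
    (hgap : |f (hA.eigenvalues ⟨m₀, hm⟩)| < |f (hA.eigenvalues ⟨m₀ - 1, by omega⟩)|)
    (fA : Matrix (Fin n) (Fin n) ℂ)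
    (hfA : fA = ∑ k, (f (hA.eigenvalues k) : ℂ) •
      Matrix.vecMulVec (fun i => hA.eigenvectorBasis k i)
        (fun j => star (hA.eigenvectorBasis k j)))
    (U : Submodule ℂ (EuclideanSpace ℂ (Fin n)))
    (hU : U = Submodule.span ℂ {v | ∃ k : Fin n, (k : ℕ) < m₀ ∧ v = hA.eigenvectorBasis k})
    (X : Submodule ℂ (EuclideanSpace ℂ (Fin n)))
    (hXU : X ⊓ Uᗮ = ⊥) :
    ∃ C : ℝ, ∀ j : ℕ, ∀ v ∈ X.map (Matrix.toEuclideanLin (fA ^ j)),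
      ‖v‖ = 1 → Metric.infDist v (U : Set (EuclideanSpace ℂ (Fin n))) ≤
        C * (|f (hA.eigenvalues ⟨m₀, hm⟩)| / |f (hA.eigenvalues ⟨m₀ - 1, by omega⟩)|) ^ j := by
  set b := hA.eigenvectorBasis
  have hT : ∀ k, toEuclideanLin fA (b k) = (f (hA.eigenvalues k) : ℂ) • b k :=
    hfA ▸ toEuclideanLin_sum_smul_vecMulVec_apply b _
  have hUs : U = Submodule.span ℂ (b '' {k | (k : ℕ) < m₀}) := by
    rw [hU]
    congr 1
    ext v
    simp [eq_comm]
  have hσ : 0 < |f (hA.eigenvalues ⟨m₀ - 1, by omega⟩)| := (abs_nonneg _).trans_lt hgap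
  have hs : ∀ k ∈ {k : Fin n | (k : ℕ) < m₀},
      |f (hA.eigenvalues ⟨m₀ - 1, by omega⟩)| ≤ ‖(f (hA.eigenvalues k) : ℂ)‖ := by
    intro k hk
    rw [Complex.norm_real, Real.norm_eq_abs]
    exact hord _ _ (Nat.le_sub_one_of_lt hk)
  have hsc : ∀ k ∉ {k : Fin n | (k : ℕ) < m₀},
      ‖(f (hA.eigenvalues k) : ℂ)‖ ≤ |f (hA.eigenvalues ⟨m₀, hm⟩)| := by
    intro k hk
    rw [Complex.norm_real, Real.norm_eq_abs]
    exact hord _ _ (not_lt.mp hk)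
  obtain ⟨C, hC⟩ := b.exists_infDist_map_pow_le hT hσ (abs_nonneg _) hs hsc (hUs ▸ hXU)
  refine ⟨C, fun j v hv => ?_⟩
  rw [Matrix.toLpLin_pow] at hv
  exact hUs ▸ hC j v hv
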